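/- Let W, A, B be words over {+,-,*} such that W ≥ A+B and W ≥ A-B (concatenation of A, a single symbol, and B). Then W ≥ A+-B or W ≥ A-+B. -/
import Mathlib


inductive Symb : Type
  | plus | minus | star
deriving DecidableEq


/-- the dual of a symbol: `+` ↦ `-`, `-` ↦ `+`, `*` ↦ `*` -/
def dualSym : Symb → Symb
  | Symb.plus => Symb.minus
  | Symb.minus => Symb.plus
  | Symb.star => Symb.star

/-- the dual (involution) of a word: reverse and dualize each symbol -/
def dualWord (W : List Symb) : List Symb := (W.map dualSym).reverse

/-- the arc relation of the reflexive path `P(W)` on vertices `{0,…,|W|}` -/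
def pathArc (W : List Symb) (i j : ℕ) : Prop :=
  i ≤ W.length ∧ j ≤ W.length ∧
    (i = j ∨ (j = i + 1 ∧ (W[i]? = some Symb.plus ∨ W[i]? = some Symb.star))
           ∨ (i = j + 1 ∧ (W[j]? = some Symb.minus ∨ W[j]? = some Symb.star)))

/-- `f` is an end-point preserving homomorphism from the path `P(V)` onto the path `P(U)` -/
def EPHom (V U : List Symb) (f : ℕ → ℕ) : Prop :=
  f 0 = 0 ∧ f V.length = U.length ∧
  (∀ i j, pathArc V i j → pathArc U (f i) (f j)) ∧
  (∀ m, m ≤ U.length → ∃ i, i ≤ V.length ∧ f i = m)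

/-- the order on words: `U ≤ V` iff there is an end-point preserving
homomorphism from `P(V)` onto `P(U)` -/
def wle (U V : List Symb) : Prop := ∃ f, EPHom V U f

namespace Stmt4Aux

lemma arc_bound {U : List Symb} {x y : ℕ} (h : pathArc U x y) :
    x ≤ U.length ∧ y ≤ U.length ∧ y ≤ x + 1 ∧ x ≤ y + 1 := by
  obtain ⟨hx, hy, h⟩ := h
  refine ⟨hx, hy, ?_, ?_⟩ <;> rcases h with h | ⟨h, -⟩ | ⟨h, -⟩ <;> omega

lemma arc_loop {U : List Symb} {i : ℕ} (h : i ≤ U.length) : pathArc U i i :=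
  ⟨h, h, Or.inl rfl⟩

lemma step_bound {W U : List Symb} {f : ℕ → ℕ} (hf : EPHom W U f) {i : ℕ}
    (hi : i < W.length) : f (i + 1) ≤ f i + 1 ∧ f i ≤ f (i + 1) + 1 := by
  have hsome : W[i]? = some (W[i]'hi) := List.getElem?_eq_getElem hi
  have harc : pathArc W i (i + 1) ∨ pathArc W (i + 1) i := by
    cases h : W[i]'hi with
    | plus => exact Or.inl ⟨by omega, by omega, Or.inr (Or.inl ⟨rfl, Or.inl (by rw [hsome, h])⟩)⟩
    | minus => exact Or.inr ⟨by omega, by omega, Or.inr (Or.inr ⟨rfl, Or.inl (by rw [hsome, h])⟩)⟩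
    | star => exact Or.inl ⟨by omega, by omega, Or.inr (Or.inl ⟨rfl, Or.inr (by rw [hsome, h])⟩)⟩
  rcases harc with h | h
  · have := arc_bound (hf.2.2.1 _ _ h); omega
  · have := arc_bound (hf.2.2.1 _ _ h); omega

/-- discrete intermediate value theorem, upward version -/
lemma ivt (f : ℕ → ℕ) (s : ℕ) :
    ∀ t, s ≤ t → (∀ i, s ≤ i → i < t → f (i + 1) ≤ f i + 1) →
      ∀ m, f s ≤ m → m ≤ f t → ∃ i, s ≤ i ∧ i ≤ t ∧ f i = m := by
  intro t ht
  induction t, ht using Nat.le_induction with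
  | base =>
    intro _ m h1 h2
    exact ⟨s, le_refl _, le_refl _, le_antisymm h2 h1 ▸ rfl⟩
  | succ t ht ih =>
    intro hstep m h1 h2
    by_cases hm : m ≤ f t
    · obtain ⟨i, his, hit, hfi⟩ := ih (fun i h h' => hstep i h (by omega)) m h1 hm
      exact ⟨i, his, by omega, hfi⟩
    · have hb := hstep t ht (by omega)
      exact ⟨t + 1, by omega, le_refl _, by omega⟩

lemma get_mid (A l : List Symb) : (A ++ l)[A.length]? = l[0]? := by
  rw [List.getElem?_append_right (le_refl _)]
  simp

lemma get_mid2 (A B : List Symb) (s t : Symb) :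
    (A ++ s :: t :: B)[A.length + 1]? = some t := by
  rw [List.getElem?_append_right (by omega)]
  have h : A.length + 1 - A.length = 1 := by omega
  rw [h]
  simp

lemma get_low {A : List Symb} (B : List Symb) {s : Symb} {x : ℕ} (hx : x ≤ A.length) :
    (A ++ s :: B)[x]? = (A ++ [s])[x]? := by
  rw [show A ++ s :: B = (A ++ [s]) ++ B by simp,
    List.getElem?_append_left (by simp; omega)]

lemma get_high {A B : List Symb} (s : Symb) {t : Symb} {x : ℕ} (hx : A.length + 1 ≤ x) :
    (A ++ s :: t :: B)[x + 1]? = (A ++ t :: B)[x]? := by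
  rw [show A ++ s :: t :: B = (A ++ [s]) ++ t :: B by simp,
    List.getElem?_append_right (by simp; omega),
    List.getElem?_append_right (by omega)]
  congr 1
  simp only [List.length_append, List.length_singleton]
  omega

lemma head_arc {A B : List Symb} (s t : Symb) {x y : ℕ} (h : pathArc (A ++ s :: B) x y) :
    pathArc (A ++ s :: t :: B) (min x (A.length + 1)) (min y (A.length + 1)) := by
  have lenT : (A ++ s :: t :: B).length = A.length + B.length + 2 := by
    rw [List.length_append]; simp; omega
  obtain ⟨hx, hy, hd⟩ := h
  refine ⟨by omega, by omega, ?_⟩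
  rcases hd with rfl | ⟨rfl, hsym⟩ | ⟨rfl, hsym⟩
  · exact Or.inl rfl
  · by_cases hxa : x ≤ A.length
    · rw [min_eq_left (by omega), min_eq_left (by omega)]
      refine Or.inr (Or.inl ⟨rfl, ?_⟩)
      rw [get_low (t :: B) hxa]
      rwa [get_low B hxa] at hsym
    · rw [min_eq_right (by omega), min_eq_right (by omega)]
      exact Or.inl rfl
  · by_cases hya : y ≤ A.length
    · rw [min_eq_left (by omega), min_eq_left (by omega)]
      refine Or.inr (Or.inr ⟨rfl, ?_⟩)
      rw [get_low (t :: B) hya]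
      rwa [get_low B hya] at hsym
    · rw [min_eq_right (by omega), min_eq_right (by omega)]
      exact Or.inl rfl

lemma tail_arc {A B : List Symb} (s : Symb) {t : Symb} {x y : ℕ}
    (hx : A.length + 1 ≤ x) (hy : A.length + 1 ≤ y) (h : pathArc (A ++ t :: B) x y) :
    pathArc (A ++ s :: t :: B) (x + 1) (y + 1) := by
  have lenT : (A ++ s :: t :: B).length = A.length + B.length + 2 := by
    rw [List.length_append]; simp; omega
  have lenU : (A ++ t :: B).length = A.length + B.length + 1 := by
    rw [List.length_append]; simp; omega
  obtain ⟨hxl, hyl, hd⟩ := h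
  refine ⟨by omega, by omega, ?_⟩
  rcases hd with rfl | ⟨rfl, hsym⟩ | ⟨rfl, hsym⟩
  · exact Or.inl rfl
  · exact Or.inr (Or.inl ⟨rfl, by rwa [get_high s hx]⟩)
  · exact Or.inr (Or.inr ⟨rfl, by rwa [get_high s hy]⟩)

lemma cross {W A B : List Symb} {t : Symb} {f : ℕ → ℕ}
    (hf : EPHom W (A ++ t :: B) f) (ht : t = Symb.plus ∨ t = Symb.minus) :
    ∃ p, p < W.length ∧ W[p]? = some t ∧ f (p + 1) = A.length + 1 ∧
      ∀ i, p < i → i ≤ W.length → A.length + 1 ≤ f i := by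
  obtain ⟨hf0, hfN, hfA, hfS⟩ := hf
  have lenU : (A ++ t :: B).length = A.length + B.length + 1 := by
    rw [List.length_append]; simp; omega
  set P : ℕ → Prop := fun i => f i ≤ A.length with hP
  have hdec : DecidablePred P := fun i => inferInstanceAs (Decidable (f i ≤ A.length))
  set p := Nat.findGreatest P W.length with hp
  have hpn : p ≤ W.length := Nat.findGreatest_le W.length
  have hp0 : P p := Nat.findGreatest_spec (Nat.zero_le _) (show P 0 by simp only [hP]; rw [hf0]; exact Nat.zero_le _)
  have hpfa : f p ≤ A.length := hp0
  have hpnlt : p < W.length := by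
    rcases lt_or_eq_of_le hpn with h | h
    · exact h
    · exfalso; rw [h] at hpfa; rw [hfN, lenU] at hpfa; omega
  have high : ∀ i, p < i → i ≤ W.length → A.length + 1 ≤ f i := by
    intro i h1 h2
    have := Nat.findGreatest_is_greatest (P := P) (n := W.length) h1 h2
    simp only [hP] at this
    omega
  have hstep := step_bound ⟨hf0, hfN, hfA, hfS⟩ hpnlt
  have hp1 : f (p + 1) = A.length + 1 := by
    have := high (p + 1) (by omega) (by omega); omega
  have hpa : f p = A.length := by omega
  have hsome : W[p]? = some (W[p]'hpnlt) := List.getElem?_eq_getElem hpnlt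
  have hmid : (A ++ t :: B)[A.length]? = some t := by rw [get_mid]; simp
  have harc1 : (W[p]? = some Symb.plus ∨ W[p]? = some Symb.star) →
      (t = Symb.plus ∨ t = Symb.star) := by
    intro hc
    have harc : pathArc W p (p + 1) := ⟨by omega, by omega, Or.inr (Or.inl ⟨rfl, hc⟩)⟩
    have himg := hfA _ _ harc
    rw [hpa, hp1] at himg
    rcases himg.2.2 with h | ⟨_, h⟩ | ⟨h, _⟩
    · omega
    · rw [hmid] at h
      rcases h with h | h
      · exact Or.inl (Option.some_injective _ h)
      · exact Or.inr (Option.some_injective _ h)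
    · omega
  have harc2 : (W[p]? = some Symb.minus ∨ W[p]? = some Symb.star) →
      (t = Symb.minus ∨ t = Symb.star) := by
    intro hc
    have harc : pathArc W (p + 1) p := ⟨by omega, by omega, Or.inr (Or.inr ⟨rfl, hc⟩)⟩
    have himg := hfA _ _ harc
    rw [hpa, hp1] at himg
    rcases himg.2.2 with h | ⟨h, _⟩ | ⟨_, h⟩
    · omega
    · omega
    · rw [hmid] at h
      rcases h with h | h
      · exact Or.inl (Option.some_injective _ h)
      · exact Or.inr (Option.some_injective _ h)
  have hWt : W[p]? = some t := by
    cases hσ : W[p]'hpnlt with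
    | plus =>
      have := harc1 (Or.inl (by rw [hsome, hσ]))
      rcases ht with rfl | rfl
      · rw [hsome, hσ]
      · rcases this with h | h <;> cases h
    | minus =>
      have := harc2 (Or.inl (by rw [hsome, hσ]))
      rcases ht with rfl | rfl
      · rcases this with h | h <;> cases h
      · rw [hsome, hσ]
    | star =>
      have h1 := harc1 (Or.inr (by rw [hsome, hσ]))
      have h2 := harc2 (Or.inr (by rw [hsome, hσ]))
      rcases ht with rfl | rfl
      · rcases h1 with h | h
        · rcases h2 with h' | h' <;> cases h'
        · cases h
      · rcases h2 with h | h
        · rcases h1 with h' | h' <;> cases h'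
        · cases h
  exact ⟨p, hpnlt, hWt, hp1, high⟩

lemma master {W A B : List Symb} {s t : Symb} {f g : ℕ → ℕ}
    (hf : EPHom W (A ++ s :: B) f) (hg : EPHom W (A ++ t :: B) g)
    (ht : t ≠ Symb.star) {r : ℕ} (hrn : r < W.length)
    (hWr : W[r]? = some t) (hfr : A.length + 1 ≤ f r)
    (hgr : g (r + 1) = A.length + 1)
    (hglow : ∀ i, r < i → i ≤ W.length → A.length + 1 ≤ g i) :
    wle (A ++ s :: t :: B) W := by
  have lenT : (A ++ s :: t :: B).length = A.length + B.length + 2 := by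
    rw [List.length_append]; simp; omega
  have lenU2 : (A ++ t :: B).length = A.length + B.length + 1 := by
    rw [List.length_append]; simp; omega
  obtain ⟨hf0, hfN, hfA, hfS⟩ := hf
  obtain ⟨hg0, hgN, hgA, hgS⟩ := hg
  refine ⟨fun i => if i ≤ r then min (f i) (A.length + 1) else g i + 1, ?_, ?_, ?_, ?_⟩
  · simp only [Nat.zero_le, if_pos, hf0, lenT]
    omega
  · have : ¬ (W.length ≤ r) := by omega
    simp only [this, if_neg, not_false_iff, hgN, lenU2, lenT]
  · intro i j harc
    obtain ⟨hi, hj, hd⟩ := harc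
    simp only []
    by_cases hir : i ≤ r <;> by_cases hjr : j ≤ r
    · rw [if_pos hir, if_pos hjr]
      exact head_arc s t (hfA i j ⟨hi, hj, hd⟩)
    · -- i ≤ r < j : must be j = i+1, i = r
      rw [if_pos hir, if_neg hjr]
      rcases hd with rfl | ⟨rfl, hsym⟩ | ⟨rfl, hsym⟩
      · omega
      · have hireq : i = r := by omega
        subst hireq
        have htp : t = Symb.plus := by
          rw [hWr] at hsym
          rcases hsym with h | h
          · exact Option.some_injective _ h
          · exact absurd (Option.some_injective _ h) ht
        rw [min_eq_right (by omega), hgr]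
        refine ⟨by omega, by omega, Or.inr (Or.inl ⟨rfl, Or.inl ?_⟩)⟩
        rw [get_mid2, htp]
      · omega
    · -- j ≤ r < i : must be i = j+1, j = r
      rw [if_neg hir, if_pos hjr]
      rcases hd with rfl | ⟨rfl, hsym⟩ | ⟨rfl, hsym⟩
      · omega
      · omega
      · have hjreq : j = r := by omega
        subst hjreq
        have htm : t = Symb.minus := by
          rw [hWr] at hsym
          rcases hsym with h | h
          · exact Option.some_injective _ h
          · exact absurd (Option.some_injective _ h) ht
        rw [min_eq_right (by omega), hgr]
        refine ⟨by omega, by omega, Or.inr (Or.inr ⟨rfl, Or.inl ?_⟩)⟩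
        rw [get_mid2, htm]
    · rw [if_neg hir, if_neg hjr]
      exact tail_arc s (hglow i (by omega) hi) (hglow j (by omega) hj)
        (hgA i j ⟨hi, hj, hd⟩)
  · intro m hm
    rw [lenT] at hm
    by_cases hm1 : m ≤ A.length + 1
    · have hstep : ∀ i, 0 ≤ i → i < r →
          min (f (i + 1)) (A.length + 1) ≤ min (f i) (A.length + 1) + 1 := by
        intro i _ hilt
        have := step_bound ⟨hf0, hfN, hfA, hfS⟩ (show i < W.length by omega)
        omega
      have h0 : min (f 0) (A.length + 1) ≤ m := by rw [hf0]; omega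
      have hr : m ≤ min (f r) (A.length + 1) := by omega
      obtain ⟨i, -, hir, hfi⟩ := ivt (fun i => min (f i) (A.length + 1)) 0 r
        (Nat.zero_le _) hstep m h0 hr
      refine ⟨i, by omega, ?_⟩
      show (if i ≤ r then min (f i) (A.length + 1) else g i + 1) = m
      rw [if_pos hir]
      exact hfi
    · have hstep : ∀ i, r + 1 ≤ i → i < W.length → g (i + 1) ≤ g i + 1 := by
        intro i _ hilt
        exact (step_bound ⟨hg0, hgN, hgA, hgS⟩ hilt).1
      have h0 : g (r + 1) ≤ m - 1 := by omega
      have hn : m - 1 ≤ g W.length := by rw [hgN, lenU2]; omega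
      obtain ⟨i, hri, hin, hgi⟩ := ivt g (r + 1) W.length (by omega) hstep (m - 1) h0 hn
      refine ⟨i, hin, ?_⟩
      show (if i ≤ r then min (f i) (A.length + 1) else g i + 1) = m
      rw [if_neg (by omega)]
      omega

end Stmt4Aux

/-- If `W ≥ A+B` and `W ≥ A-B` then `W ≥ A+-B` or `W ≥ A-+B`. -/
theorem stmt_4 (W A B : List Symb)
    (h1 : wle (A ++ Symb.plus :: B) W) (h2 : wle (A ++ Symb.minus :: B) W) :
    wle (A ++ Symb.plus :: Symb.minus :: B) W ∨ wle (A ++ Symb.minus :: Symb.plus :: B) W := by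
  obtain ⟨f, hf⟩ := h1
  obtain ⟨g, hg⟩ := h2
  obtain ⟨p, hpn, hWp, hfp1, hfhigh⟩ := Stmt4Aux.cross hf (Or.inl rfl)
  obtain ⟨r, hrn, hWr, hgr1, hghigh⟩ := Stmt4Aux.cross hg (Or.inr rfl)
  have hne : p ≠ r := by
    intro h
    rw [h, hWr] at hWp
    cases Option.some_injective _ hWp
  rcases lt_or_gt_of_ne hne with hlt | hgt
  · exact Or.inl (Stmt4Aux.master hf hg (by decide) hrn hWr
      (hfhigh r hlt (le_of_lt hrn)) hgr1 hghigh)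
  · exact Or.inr (Stmt4Aux.master hg hf (by decide) hpn hWp
      (hghigh p hgt (le_of_lt hpn)) hfp1 hfhigh)
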